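/- arXiv:1206.4224 — 6 statements merged into one kernel-verified Lean document; each statement's English description precedes it below -/
import Mathlib

section
/- Let f_1, ..., f_k be nonzero polynomials in K[X] over a field K. Then the valuation of the Wronskian W(f_1,...,f_k) (if it is nonzero) is at least Σ_{j=1}^k val(f_j) − (k choose 2). -/
open Polynomial

noncomputable def wronskian {K : Type*} [Field K] {k : ℕ} (f : Fin k → K[X]) : K[X] :=
  Matrix.det (Matrix.of fun i j : Fin k => (derivative^[(i : ℕ)] (f j)))

theorem sum_perm_val_eq_choose_two {k : ℕ} (σ : Equiv.Perm (Fin k)) :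
    ∑ i, (σ i : ℕ) = k.choose 2 := by
  rw [Equiv.sum_comp σ (fun i : Fin k => (i : ℕ)), Fin.sum_univ_eq_sum_range (fun i => i),
    Finset.sum_range_id, Nat.choose_two_right]

theorem sum_tsub_choose_two_le_sum_tsub_perm {k : ℕ} (m : Fin k → ℕ) (σ : Equiv.Perm (Fin k)) :
    ∑ i, m i - k.choose 2 ≤ ∑ i, (m i - σ i) := by
  rw [tsub_le_iff_right, ← sum_perm_val_eq_choose_two σ, ← Finset.sum_add_distrib]
  exact Finset.sum_le_sum fun i _ => le_tsub_add

/-- Each term of the Leibniz expansion of the Wronskian-type determinant differentiates the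
columns `f i` a total of `0 + 1 + ⋯ + (k - 1) = k.choose 2` times, and each derivative costs at
most one factor of `q`. -/
theorem pow_dvd_det_iterate_derivative {R : Type*} [CommRing R] {k : ℕ} {q : R[X]}
    (f : Fin k → R[X]) (m : Fin k → ℕ) (hm : ∀ j, q ^ m j ∣ f j) :
    q ^ (∑ j, m j - k.choose 2) ∣
      (Matrix.of fun i j : Fin k => derivative^[(i : ℕ)] (f j)).det := by
  rw [Matrix.det_apply]
  refine Finset.dvd_sum fun σ _ => ?_
  rw [Units.smul_def, zsmul_eq_mul]
  refine Dvd.dvd.mul_left ?_ _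
  calc q ^ (∑ j, m j - k.choose 2)
      ∣ q ^ ∑ i, (m i - σ i) := pow_dvd_pow q (sum_tsub_choose_two_le_sum_tsub_perm m σ)
    _ = ∏ i, q ^ (m i - σ i) := (Finset.prod_pow_eq_pow_sum _ _ _).symm
    _ ∣ ∏ i, derivative^[(σ i : ℕ)] (f i) := Finset.prod_dvd_prod_of_dvd _ _ fun i _ =>
        pow_sub_dvd_iterate_derivative_of_pow_dvd _ (hm i)

theorem stmt2_general {K : Type*} [Field K] {k : ℕ} (f : Fin k → K[X])
    (hW : wronskian f ≠ 0) :
    (∑ j, ((f j).rootMultiplicity 0 : ℤ)) - (k.choose 2 : ℤ)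
      ≤ ((wronskian f).rootMultiplicity 0 : ℤ) := by
  have hdvd : (X - C 0) ^ (∑ j, (f j).rootMultiplicity 0 - k.choose 2) ∣ wronskian f :=
    pow_dvd_det_iterate_derivative f _ fun j => pow_rootMultiplicity_dvd (f j) 0
  have hle := (le_rootMultiplicity_iff hW).mpr hdvd
  have hcast := Nat.cast_sum (R := ℤ) Finset.univ fun j => (f j).rootMultiplicity 0
  omega

theorem stmt2 {K : Type*} [Field K] {k : ℕ} (f : Fin k → K[X])
    (hf : ∀ j, f j ≠ 0) (hW : wronskian f ≠ 0) :
    (∑ j, ((f j).rootMultiplicity 0 : ℤ)) - (k.choose 2 : ℤ)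
      ≤ ((wronskian f).rootMultiplicity 0 : ℤ) :=
  stmt2_general f hW
end

section
/- Let K be a field of characteristic zero and let f_j = X^{α_j}(1+X)^{β_j} for 1 ≤ j ≤ k, where α_j, β_j ≥ k for all j. If f_1,...,f_k are linearly independent over K, then the valuation of their Wronskian is at most Σ_{j=1}^k α_j. -/
/-!
In the permutation expansion of the Wronskian every term is a product of derivatives
`f_j^{(σ j)}`, each divisible by `(1 + X)^(β_j - σ j)` and of degree at most `α_j + β_j - σ j`.
Since `σ` is a permutation these exponents always sum to the same numbers, so `W` is divisible
by `(1 + X)^M` with `M = ∑ (β_j - j)` and has degree at most `∑ α_j + M`. The multiplicities of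
the distinct roots `0` and `-1` add up to at most the degree, which leaves at most `∑ α_j` for `0`.
-/

open Polynomial

theorem Multiset.count_add_count_le_card {α : Type*} [DecidableEq α] {a b : α} (hab : a ≠ b)
    (s : Multiset α) : s.count a + s.count b ≤ Multiset.card s := by
  rw [Multiset.card_eq_countP_add_countP (a = ·) s]
  refine Nat.add_le_add_left ?_ _
  rw [Multiset.countP_eq_card_filter, ← Multiset.count_filter_of_pos (p := (a ≠ ·)) hab]
  exact Multiset.count_le_card _ _

namespace Polynomial

theorem rootMultiplicity_add_rootMultiplicity_le_natDegree {R : Type*} [CommRing R] [IsDomain R]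
    {a b : R} (hab : a ≠ b) (p : R[X]) :
    p.rootMultiplicity a + p.rootMultiplicity b ≤ p.natDegree := by
  classical
  rw [← count_roots, ← count_roots]
  exact (Multiset.count_add_count_le_card hab _).trans (card_roots' p)

end Polynomial

theorem Fin.sum_tsub_perm {k : ℕ} (e : Fin k → ℕ) (he : ∀ i j : Fin k, (i : ℕ) ≤ e j)
    (σ : Equiv.Perm (Fin k)) : ∑ j, (e j - σ j) = ∑ j, (e j - j) := by
  zify [he]
  rw [Finset.sum_sub_distrib, Finset.sum_sub_distrib, Equiv.sum_comp σ (fun j => ((j : ℕ) : ℤ))]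

section Wronskian

variable {K : Type*} [Field K] {k : ℕ}

theorem wronskian_eq_sum_perm (f : Fin k → K[X]) :
    wronskian f = ∑ σ : Equiv.Perm (Fin k), σ.sign • ∏ j, derivative^[σ j] (f j) :=
  Matrix.det_apply _

theorem pow_dvd_wronskian (c : K[X]) (b : Fin k → ℕ) (hb : ∀ i j : Fin k, (i : ℕ) ≤ b j)
    (f : Fin k → K[X]) (hf : ∀ j, c ^ b j ∣ f j) : c ^ ∑ j, (b j - j) ∣ wronskian f := by
  rw [wronskian_eq_sum_perm]
  refine Finset.dvd_sum fun σ _ => dvd_smul_of_dvd _ ?_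
  rw [← Fin.sum_tsub_perm b hb σ, ← Finset.prod_pow_eq_pow_sum]
  exact Finset.prod_dvd_prod_of_dvd _ _ fun j _ =>
    pow_sub_dvd_iterate_derivative_of_pow_dvd _ (hf j)

theorem natDegree_wronskian_le (d : Fin k → ℕ) (hd : ∀ i j : Fin k, (i : ℕ) ≤ d j)
    (f : Fin k → K[X]) (hf : ∀ j, (f j).natDegree ≤ d j) :
    (wronskian f).natDegree ≤ ∑ j, (d j - j) := by
  rw [wronskian_eq_sum_perm]
  refine natDegree_sum_le_of_forall_le _ _ fun σ _ => ?_
  refine (natDegree_smul_le _ _).trans ((natDegree_prod_le _ _).trans ?_)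
  rw [← Fin.sum_tsub_perm d hd σ]
  exact Finset.sum_le_sum fun j _ =>
    (natDegree_iterate_derivative _ _).trans (Nat.sub_le_sub_right (hf j) _)

end Wronskian

theorem stmt3_general {K : Type*} [Field K] {k : ℕ} (α β : Fin k → ℕ)
    (hβ : ∀ j, k ≤ β j)
    (f : Fin k → K[X]) (hf : ∀ j, f j = X ^ (α j) * (1 + X) ^ (β j)) :
    (wronskian f).rootMultiplicity 0 ≤ ∑ j, α j := by
  by_cases hW : wronskian f = 0
  · simp [hW]
  have hβ' (i j : Fin k) : (i : ℕ) ≤ β j := i.isLt.le.trans (hβ j)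
  have hdvd : (X - C (-1)) ^ ∑ j, (β j - j) ∣ wronskian f :=
    pow_dvd_wronskian _ β hβ' f fun j => by
      rw [hf j, map_neg, map_one, sub_neg_eq_add, add_comm X]
      exact dvd_mul_left _ _
  have hdeg : (wronskian f).natDegree ≤ ∑ j, (α j + β j - j) :=
    natDegree_wronskian_le _ (fun i j => (hβ' i j).trans le_add_self) f fun j => by
      rw [hf j]
      compute_degree
  have hsum : ∑ j, (α j + β j - j) = ∑ j, α j + ∑ j, (β j - j) := by
    rw [← Finset.sum_add_distrib]
    exact Finset.sum_congr rfl fun j _ => Nat.add_sub_assoc (hβ' j j) _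
  have hroots := rootMultiplicity_add_rootMultiplicity_le_natDegree (a := 0) (b := -1)
    (by simp) (wronskian f)
  have hmult := (le_rootMultiplicity_iff hW).2 hdvd
  omega

theorem stmt3 {K : Type*} [Field K] [CharZero K] {k : ℕ} (α β : Fin k → ℕ)
    (hα : ∀ j, k ≤ α j) (hβ : ∀ j, k ≤ β j)
    (f : Fin k → K[X]) (hf : ∀ j, f j = X ^ (α j) * (1 + X) ^ (β j))
    (hli : LinearIndependent K f) :
    (wronskian f).rootMultiplicity 0 ≤ ∑ j, α j :=
  stmt3_general α β hβ f hf
end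

section
/- Let K be a field of characteristic zero, k ≥ 1, and P = Σ_{j=1}^k a_j (1+X)^{β_j} with a_j ∈ K and distinct nonnegative integers β_j (Hajós' Lemma). If P is not identically zero, then val(P) ≤ k − 1. -/
/-!
The operator `P ↦ (1 + X) P'` acts on `(1 + X) ^ m` as multiplication by `m`, so
`(1 + X) P' - β₀ P` kills the term `(1 + X) ^ β₀` of `P` while lowering the order of vanishing
at `0` by at most one. By induction on the number of terms, if `X ^ k` divides a sum of `k` such
terms, the operator sends it to zero, i.e. `P ∣ (1 + X) P'`. A polynomial vanishing at `0` can
only divide `(1 + X) P'` if it is zero, since in characteristic zero `P'` vanishes to order one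
less than `P`.
-/

open Polynomial

namespace Polynomial

variable {K : Type*} [Field K]

theorem eq_zero_of_dvd_mul_derivative [CharZero K] {P u : K[X]} {t : K} (hu : ¬u.IsRoot t)
    (hP : P.IsRoot t) (hdvd : P ∣ u * derivative P) : P = 0 := by
  by_contra hP0
  have hcop : IsCoprime ((X - C t) ^ P.rootMultiplicity t) u :=
    ((irreducible_X_sub_C t).coprime_iff_not_dvd.2 (by rwa [dvd_iff_isRoot])).pow_left
  have hdvd' : (X - C t) ^ P.rootMultiplicity t ∣ derivative P :=
    hcop.dvd_of_dvd_mul_left ((pow_rootMultiplicity_dvd P t).trans hdvd)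
  have hP' : derivative P ≠ 0 := fun h ↦ by
    rw [eq_C_of_derivative_eq_zero h, IsRoot, eval_C] at hP
    exact hP0 (by rw [eq_C_of_derivative_eq_zero h, hP, C_0])
  have hle := (le_rootMultiplicity_iff hP').2 hdvd'
  rw [derivative_rootMultiplicity_of_root hP] at hle
  have hpos := (rootMultiplicity_pos hP0).2 hP
  omega

theorem one_add_X_mul_derivative_one_add_X_pow (m : ℕ) :
    (1 + X) * derivative ((1 + X : K[X]) ^ m) = C (m : K) * (1 + X) ^ m := by
  cases m with
  | zero => simp
  | succ m =>
    rw [derivative_pow_succ, derivative_add, derivative_one, derivative_X]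
    push_cast
    ring

theorem one_add_X_mul_derivative_sum_sub {ι : Type*} (s : Finset ι) (a : ι → K) (β : ι → ℕ)
    (c : ℕ) :
    (1 + X) * derivative (∑ j ∈ s, C (a j) * (1 + X) ^ β j) -
        C (c : K) * ∑ j ∈ s, C (a j) * (1 + X) ^ β j =
      ∑ j ∈ s, C (a j * (β j - c)) * (1 + X) ^ β j := by
  simp only [derivative_sum, derivative_C_mul, Finset.mul_sum, ← Finset.sum_sub_distrib]
  refine Finset.sum_congr rfl fun j _ ↦ ?_
  rw [mul_left_comm, one_add_X_mul_derivative_one_add_X_pow, C_mul, C_sub]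
  ring

variable [CharZero K]

theorem sum_eq_zero_of_X_pow_card_dvd {ι : Type*} (s : Finset ι) (a : ι → K) (β : ι → ℕ)
    (h : X ^ s.card ∣ ∑ j ∈ s, C (a j) * (1 + X) ^ β j) :
    ∑ j ∈ s, C (a j) * (1 + X) ^ β j = 0 := by
  classical
  induction s using Finset.induction_on generalizing a with
  | empty => simp
  | insert i s hi ih =>
    set P := ∑ j ∈ insert i s, C (a j) * (1 + X) ^ β j
    rw [Finset.card_insert_of_notMem hi] at h
    have hR : X ^ s.card ∣ ∑ j ∈ s, C (a j * (β j - β i)) * (1 + X) ^ β j := by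
      rw [← Finset.sum_insert_zero (a := i) (by simp), ← one_add_X_mul_derivative_sum_sub]
      exact dvd_sub ((pow_sub_one_dvd_derivative_of_pow_dvd h).mul_left _)
        ((pow_dvd_pow X s.card.le_succ |>.trans h).mul_left _)
    have hode : (1 + X) * derivative P = C (β i : K) * P := by
      rw [← sub_eq_zero, one_add_X_mul_derivative_sum_sub, Finset.sum_insert hi]
      simpa using ih _ hR
    refine eq_zero_of_dvd_mul_derivative (u := 1 + X) (t := 0) (by simp) ?_
      (hode ▸ dvd_mul_left P _)
    rw [IsRoot, ← coeff_zero_eq_eval_zero, ← X_dvd_iff]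
    exact (dvd_pow_self X s.card.succ_ne_zero).trans h

theorem rootMultiplicity_zero_sum_lt_card {ι : Type*} (s : Finset ι) (a : ι → K) (β : ι → ℕ)
    (hP : ∑ j ∈ s, C (a j) * (1 + X) ^ β j ≠ 0) :
    (∑ j ∈ s, C (a j) * (1 + X) ^ β j).rootMultiplicity 0 < s.card := by
  by_contra! h
  have hdvd := pow_rootMultiplicity_dvd (∑ j ∈ s, C (a j) * (1 + X) ^ β j) 0
  rw [C_0, sub_zero] at hdvd
  exact hP (sum_eq_zero_of_X_pow_card_dvd s a β ((pow_dvd_pow X h).trans hdvd))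

end Polynomial

theorem stmt4_general {K : Type*} [Field K] [CharZero K] (k : ℕ)
    (a : Fin k → K) (β : Fin k → ℕ)
    (P : K[X]) (hPdef : P = ∑ j, C (a j) * (1 + X) ^ (β j))
    (hP : P ≠ 0) :
    P.rootMultiplicity 0 ≤ k - 1 := by
  subst hPdef
  have hlt := rootMultiplicity_zero_sum_lt_card Finset.univ a β hP
  rw [Finset.card_univ, Fintype.card_fin] at hlt
  omega

theorem stmt4 {K : Type*} [Field K] [CharZero K] (k : ℕ) (hk : 1 ≤ k)
    (a : Fin k → K) (β : Fin k → ℕ) (hβ : Function.Injective β)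
    (P : K[X]) (hPdef : P = ∑ j, C (a j) * (1 + X) ^ (β j))
    (hP : P ≠ 0) :
    P.rootMultiplicity 0 ≤ k - 1 :=
  stmt4_general k a β P hPdef hP
end

section
/- Let α_1 ≤ ... ≤ α_k be nonnegative integers. The smallest ℓ such that α_{ℓ+1} > max_{1≤j≤ℓ}(α_j + (ℓ+1-j choose 2)) coincides with the smallest ℓ such that α_{ℓ+1} > α_1 + (ℓ choose 2). -/
/-!
If `ℓ` is least with `α 1 + C(ℓ, 2) < α (ℓ + 1)`, then for `1 ≤ j ≤ ℓ` minimality gives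
`α j ≤ α 1 + C(j - 1, 2)`, and superadditivity `C(j - 1, 2) + C(ℓ + 1 - j, 2) ≤ C(ℓ, 2)` turns this
into `α j + C(ℓ + 1 - j, 2) < α (ℓ + 1)`. So the least element of the weaker condition satisfies
the stronger one, and the two least elements agree.
-/

open Finset

theorem Nat.choose_add_choose_le_add_choose {k : ℕ} (hk : k ≠ 0) (m n : ℕ) :
    m.choose k + n.choose k ≤ (m + n).choose k := by
  have hsub : {(k, 0), (0, k)} ⊆ antidiagonal k := by simp [insert_subset_iff]
  rw [Nat.add_choose_eq]
  calc m.choose k + n.choose k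
      = ∑ ij ∈ {(k, 0), (0, k)}, m.choose ij.1 * n.choose ij.2 := by
        rw [sum_pair (by simp [hk])]
        simp
    _ ≤ _ := sum_le_sum_of_subset hsub

theorem isLeast_iff_of_subset_of_isLeast_mem {β : Type*} [LinearOrder β] [WellFoundedLT β]
    {A B : Set β} (hAB : A ⊆ B) (hmin : ∀ m, IsLeast B m → m ∈ A) {ℓ : β} :
    IsLeast A ℓ ↔ IsLeast B ℓ := by
  constructor
  · intro hA
    obtain ⟨m, hmB, hm⟩ := wellFounded_lt.has_min B ⟨ℓ, hAB hA.1⟩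
    have hBm : IsLeast B m := ⟨hmB, fun x hx => not_lt.1 (hm x hx)⟩
    have hℓm : ℓ = m := le_antisymm (hA.2 (hmin m hBm)) (hBm.2 (hAB hA.1))
    exact hℓm ▸ hBm
  · exact fun hB => ⟨hmin ℓ hB, fun x hx => hB.2 (hAB hx)⟩

theorem add_choose_two_lt_of_isLeast {k ℓ : ℕ} {α : ℕ → ℕ}
    (h : IsLeast {l | 1 ≤ l ∧ l + 1 ≤ k ∧ α 1 + l.choose 2 < α (l + 1)} ℓ)
    {j : ℕ} (hj : 1 ≤ j) (hjℓ : j ≤ ℓ) :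
    α j + (ℓ + 1 - j).choose 2 < α (ℓ + 1) := by
  obtain ⟨⟨hℓ, hℓk, hgap⟩, hleast⟩ := h
  have hαj : α j ≤ α 1 + (j - 1).choose 2 := by
    rcases hj.eq_or_lt with rfl | hj
    · simp
    · by_contra! hlt
      have : ℓ ≤ j - 1 := hleast ⟨by omega, by omega, by rwa [Nat.sub_add_cancel hj.le]⟩
      omega
  have hsuper := Nat.choose_add_choose_le_add_choose two_ne_zero (j - 1) (ℓ + 1 - j)
  rw [show j - 1 + (ℓ + 1 - j) = ℓ by omega] at hsuper
  omega

theorem stmt7_general (k : ℕ) (α : ℕ → ℕ)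
    (ℓ : ℕ) :
    IsLeast {l | 1 ≤ l ∧ l + 1 ≤ k ∧
        ∀ j, 1 ≤ j → j ≤ l → α j + (l + 1 - j).choose 2 < α (l + 1)} ℓ ↔
      IsLeast {l | 1 ≤ l ∧ l + 1 ≤ k ∧ α 1 + l.choose 2 < α (l + 1)} ℓ := by
  refine isLeast_iff_of_subset_of_isLeast_mem ?_ ?_
  · rintro l ⟨hl, hlk, hgaps⟩
    exact ⟨hl, hlk, by simpa using hgaps 1 le_rfl hl⟩
  · exact fun m hm => ⟨hm.1.1, hm.1.2.1, fun j => add_choose_two_lt_of_isLeast hm⟩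

theorem stmt7 (k : ℕ) (α : ℕ → ℕ)
    (hα : ∀ i j, 1 ≤ i → i ≤ j → j ≤ k → α i ≤ α j) (ℓ : ℕ) :
    IsLeast {l | 1 ≤ l ∧ l + 1 ≤ k ∧
        ∀ j, 1 ≤ j → j ≤ l → α j + (l + 1 - j).choose 2 < α (l + 1)} ℓ ↔
      IsLeast {l | 1 ≤ l ∧ l + 1 ≤ k ∧ α 1 + l.choose 2 < α (l + 1)} ℓ :=
  stmt7_general k α ℓ
end

section
/- For all integers 0 < m < 2k+3, the identity Σ_{j=0}^{k} ((2k+3)/(2j+1)) · (k+1+j choose k+1−j) · (k+1−j choose m−2j−1) = (2k+3 choose m) holds. -/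
/-!
With `u = 1 + X` and `v = -1` one has `u + v = X` and `-u v = 1 + X`, so Waring's formula for
`u ^ n + v ^ n` in terms of `u + v` and `u v` expresses `(1 + X) ^ (2k+3) - 1` as
`X ^ (2k+3) + ∑ⱼ (2k+3)/(2j+1) C(k+1+j, k+1-j) X ^ (2j+1) (1 + X) ^ (k+1-j)`; the identity is the
coefficient of `X ^ m` on both sides. Waring's formula is obtained from the Fibonacci-type
polynomials `∑ᵢ C(n-i, i) a ^ (n-2i) b ^ i`, whose three-term recurrence is Pascal's rule.
-/

open Finset Polynomial

section LucasU

variable {R : Type*} [CommSemiring R]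

/-- The Lucas sequence `U_{n+1}(P, Q)` with `P = a` and `Q = -b`. -/
def lucasU (a b : R) (n : ℕ) : R :=
  ∑ i ∈ range (n + 1), ((n - i).choose i : R) * a ^ (n - 2 * i) * b ^ i

theorem lucasU_eq_sum_range (a b : R) {n N : ℕ} (h : n < 2 * N) :
    lucasU a b n = ∑ i ∈ range N, ((n - i).choose i : R) * a ^ (n - 2 * i) * b ^ i := by
  have hvanish : ∀ i, n < 2 * i → ((n - i).choose i : R) * a ^ (n - 2 * i) * b ^ i = 0 := by
    intro i hi
    rw [Nat.choose_eq_zero_of_lt (by omega), Nat.cast_zero, zero_mul, zero_mul]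
  calc lucasU a b n
      = ∑ i ∈ range (n + 1 + N), ((n - i).choose i : R) * a ^ (n - 2 * i) * b ^ i :=
        sum_subset (range_subset_range.2 (by omega)) fun i _ hi =>
          hvanish i (by rw [mem_range] at hi; omega)
    _ = _ := (sum_subset (range_subset_range.2 (by omega)) fun i _ hi =>
          hvanish i (by rw [mem_range] at hi; omega)).symm

theorem choose_sub_succ_succ (n i : ℕ) :
    (n + 1 - i).choose (i + 1) = (n - i).choose i + (n - i).choose (i + 1) := by
  rcases le_or_gt i n with h | h
  · rw [show n + 1 - i = n - i + 1 by omega, Nat.choose_succ_succ']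
  · rw [show n + 1 - i = 0 by omega, show n - i = 0 by omega, Nat.choose_zero_succ,
      Nat.choose_eq_zero_of_lt (by omega)]

theorem lucasU_term_add_two (a b : R) (n i : ℕ) :
    ((n + 2 - (i + 1)).choose (i + 1) : R) * a ^ (n + 2 - 2 * (i + 1)) * b ^ (i + 1) =
      a * (((n + 1 - (i + 1)).choose (i + 1) : R) * a ^ (n + 1 - 2 * (i + 1)) * b ^ (i + 1)) +
        b * (((n - i).choose i : R) * a ^ (n - 2 * i) * b ^ i) := by
  have hpow : ((n - i).choose (i + 1) : R) * a ^ (n - 2 * i) =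
      (n - i).choose (i + 1) * (a * a ^ (n + 1 - 2 * (i + 1))) := by
    rcases le_or_gt (2 * i + 1) n with h | h
    · rw [← pow_succ', show n + 1 - 2 * (i + 1) + 1 = n - 2 * i by omega]
    · rw [Nat.choose_eq_zero_of_lt (by omega), Nat.cast_zero, zero_mul, zero_mul]
  rw [show n + 2 - (i + 1) = n + 1 - i by omega, show n + 2 - 2 * (i + 1) = n - 2 * i by omega,
    show n + 1 - (i + 1) = n - i by omega, choose_sub_succ_succ, Nat.cast_add, add_mul, add_mul,
    hpow]
  ring

theorem lucasU_add_two (a b : R) (n : ℕ) :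
    lucasU a b (n + 2) = a * lucasU a b (n + 1) + b * lucasU a b n := by
  rw [lucasU_eq_sum_range a b (n := n + 1) (N := n + 3) (by omega),
    lucasU_eq_sum_range a b (n := n) (N := n + 2) (by omega), lucasU, sum_range_succ',
    sum_range_succ' _ (n + 2), sum_congr rfl fun i _ => lucasU_term_add_two a b n i, sum_add_distrib, mul_add, mul_sum,
    mul_sum]
  simp only [Nat.sub_zero, mul_zero, Nat.choose_zero_right, Nat.cast_one, one_mul, pow_zero,
    mul_one, pow_succ' a (n + 1)]
  ring

theorem lucasU_two_mul_add_one (a b : R) (k : ℕ) :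
    lucasU a b (2 * k + 1) =
      ∑ j ∈ range (k + 1), ((k + 1 + j).choose (k - j) : R) * a ^ (2 * j + 1) * b ^ (k - j) := by
  rw [lucasU_eq_sum_range a b (N := k + 1) (by omega), ← sum_range_reflect]
  refine sum_congr rfl fun j hj => ?_
  have hj := mem_range.1 hj
  rw [show k + 1 - 1 - j = k - j by omega, show 2 * k + 1 - (k - j) = k + 1 + j by omega,
    show 2 * k + 1 - 2 * (k - j) = 2 * j + 1 by omega]

end LucasU

theorem two_mul_add_one_mul_choose_add_choose {j k : ℕ} (hj : j ≤ k) :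
    (2 * j + 1) * ((k + 2 + j).choose (k + 1 - j) + (k + 1 + j).choose (k - j)) =
      (2 * k + 3) * (k + 1 + j).choose (k + 1 - j) := by
  obtain ⟨d, rfl⟩ : ∃ d, k = j + d := ⟨k - j, by omega⟩
  have hsucc := Nat.choose_succ_right_eq (2 * j + d + 1) d
  rw [show 2 * j + d + 1 - d = 2 * j + 1 by omega] at hsucc
  rw [show j + d + 2 + j = 2 * j + d + 1 + 1 by omega, show j + d + 1 - j = d + 1 by omega,
    show j + d + 1 + j = 2 * j + d + 1 by omega, show j + d - j = d by omega,
    Nat.choose_succ_succ']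
  linear_combination 2 * hsucc.symm

theorem lucasU_add_two_add_mul_lucasU {R : Type*} [CommRing R] {a b u v : R} (ha : a = u + v)
    (hb : b = -(u * v)) (n : ℕ) :
    lucasU a b (n + 2) + b * lucasU a b n = u ^ (n + 2) + v ^ (n + 2) := by
  have hU0 : lucasU a b 0 = 1 := by simp [lucasU]
  have hU1 : lucasU a b 1 = a := by simp [lucasU, sum_range_succ]
  have hU2 := lucasU_add_two a b 0
  have hU3 := lucasU_add_two a b 1
  subst ha hb
  induction n using Nat.twoStepInduction with
  | zero => rw [hU2, hU1, hU0]; ring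
  | one => rw [hU3, hU2, hU1, hU0]; ring
  | more n ih₀ ih₁ =>
    linear_combination lucasU_add_two (u + v) (-(u * v)) (n + 2) +
      (-(u * v)) * lucasU_add_two (u + v) (-(u * v)) n + (u + v) * ih₁ - u * v * ih₀

theorem lucasU_add_mul_lucasU_two_mul_add_one {R : Type*} [CommSemiring R] [Algebra ℚ R]
    (a b : R) (k : ℕ) :
    lucasU a b (2 * k + 3) + b * lucasU a b (2 * k + 1) =
      a ^ (2 * k + 3) + ∑ j ∈ range (k + 1),
        ((2 * k + 3 : ℚ) / (2 * j + 1) * (k + 1 + j).choose (k + 1 - j)) •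
          (a ^ (2 * j + 1) * b ^ (k + 1 - j)) := by
  rw [show 2 * k + 3 = 2 * (k + 1) + 1 by ring, lucasU_two_mul_add_one, lucasU_two_mul_add_one,
    sum_range_succ, mul_sum, add_right_comm, ← sum_add_distrib, add_comm]
  simp only [Nat.sub_self, Nat.choose_zero_right, Nat.cast_one, one_mul, pow_zero, mul_one]
  refine congrArg _ (sum_congr rfl fun j hj => ?_)
  have hj := Nat.lt_succ_iff.1 (mem_range.1 hj)
  have hcoeff : (2 * k + 3 : ℚ) / (2 * j + 1) * (k + 1 + j).choose (k + 1 - j) =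
      ((k + 2 + j).choose (k + 1 - j) + (k + 1 + j).choose (k - j) : ℕ) := by
    rw [div_mul_eq_mul_div, div_eq_iff (by positivity)]
    exact_mod_cast (two_mul_add_one_mul_choose_add_choose hj).symm.trans (mul_comm _ _)
  rw [hcoeff, Nat.cast_smul_eq_nsmul, nsmul_eq_mul, show k + 1 + 1 + j = k + 2 + j by ring,
    show k + 1 - j = k - j + 1 by omega, pow_succ' b]
  push_cast
  ring

theorem stmt8 (k m : ℕ) (hm0 : 0 < m) (hm : m < 2 * k + 3) :
    (∑ j ∈ Finset.range (k + 1),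
        if 2 * j + 1 ≤ m then
          ((2 * k + 3 : ℚ) / (2 * j + 1)) * ((k + 1 + j).choose (k + 1 - j))
            * ((k + 1 - j).choose (m - (2 * j + 1)))
        else 0)
      = ((2 * k + 3).choose m : ℚ) := by
  have hwaring := lucasU_add_two_add_mul_lucasU (a := (X : ℚ[X])) (b := 1 + X) (u := 1 + X)
    (v := -1) (by ring) (by ring) (2 * k + 1)
  rw [show 2 * k + 1 + 2 = 2 * k + 3 by ring, lucasU_add_mul_lucasU_two_mul_add_one,
    Odd.neg_one_pow ⟨k + 1, by ring⟩] at hwaring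
  have hcoeff := congrArg (coeff · m) hwaring
  simp only [coeff_add, coeff_neg, coeff_one, coeff_X_pow, finsetSum_coeff, coeff_smul,
    coeff_X_pow_mul', coeff_one_add_X_pow, smul_eq_mul, mul_ite, mul_zero,
    if_neg (show m ≠ 2 * k + 3 by omega), if_neg (show m ≠ 0 by omega)] at hcoeff
  simpa [mul_assoc] using hcoeff
end

section
/- Let K be a field of characteristic zero and P = Σ_{j=1}^k a_j X^{α_j}(uX+v)^{β_j}(wX+t)^{γ_j} with u,v,w,t ∈ K all nonzero and α_1 ≤ ... ≤ α_k. If P is not identically zero, then val(P) ≤ max_{1≤j≤k} (α_j + 2·(k+1−j choose 2)). -/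
/-!
Write `ord` for the order of vanishing at `0`. Among all ways of writing `P` as a combination of
the `F j = X^(α j) (uX+v)^(β j) (wX+t)^(γ j)`, take one with minimal support `s`: then the `F j`,
`j ∈ s`, are linearly independent and all coefficients are nonzero, so in characteristic zero
their Wronskian `W` is nonzero. Replacing the row of `F j₀` by that of `P` multiplies `W` by a
nonzero constant; as `X^(m - i)` divides the `i`-th derivative of a multiple of `X^m`, this gives
`ord P + ∑_{j ≠ j₀} α j ≤ ord W + T` with `T = #s.choose 2`. On the other hand
`Z = X (uX+v)(wX+t)` satisfies `Z^i F^(i) = F q` with `deg q ≤ 2i`, so `Z^T W = (∏ F j) · det q`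
and `ord W + T ≤ ∑ α j + 2T`. Hence `ord P ≤ α j₀ + 2T`, and `#s ≤ k - j₀` for `j₀ = min s`.
-/

open Polynomial Finset

lemma Fin.sum_univ_val_eq_choose_two (n : ℕ) : ∑ i : Fin n, (i : ℕ) = n.choose 2 := by
  rw [Fin.sum_univ_eq_sum_range (fun i => i) n, sum_range_id, Nat.choose_two_right]

lemma Matrix.prod_dvd_det_of_dvd {ι R : Type*} [Fintype ι] [DecidableEq ι] [CommRing R]
    (M : Matrix ι ι R) (a : ι → R) (h : ∀ p i, a p ∣ M p i) : ∏ p, a p ∣ M.det := by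
  choose N hN using h
  have hM : M = Matrix.of fun p i => a p * N p i := Matrix.ext hN
  rw [hM, Matrix.det_mul_column a N]
  exact dvd_mul_right _ _

lemma exists_linearIndepOn_sum_smul_eq {K ι V : Type*} [Field K] [AddCommGroup V] [Module K V]
    (f : ι → V) (s : Finset ι) (a : ι → K) :
    ∃ t ⊆ s, ∃ c : ι → K, LinearIndepOn K f (t : Set ι) ∧ (∀ i ∈ t, c i ≠ 0) ∧
      ∑ i ∈ s, a i • f i = ∑ i ∈ t, c i • f i := by
  classical
  set x := ∑ i ∈ s, a i • f i
  obtain ⟨t, ht, hmin⟩ := (s.powerset.filter fun t => ∃ c : ι → K, x = ∑ i ∈ t, c i • f i)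
    |>.exists_min_image card ⟨s, by simpa using ⟨a, rfl⟩⟩
  simp only [mem_filter, mem_powerset] at ht hmin
  obtain ⟨hts, c, hc⟩ := ht
  have hsupp : ∀ b : ι → K, x = ∑ i ∈ t, b i • f i → ∀ i ∈ t, b i ≠ 0 := by
    intro b hb i hi hbi
    have := hmin (t.erase i) ⟨(erase_subset _ _).trans hts, b, by
      rw [sum_erase _ (by simp [hbi])]; exact hb⟩
    rw [card_erase_of_mem hi] at this
    have := card_pos.mpr ⟨i, hi⟩
    omega
  refine ⟨t, hts, c, linearIndepOn_finset_iff.mpr fun d hd i hi => ?_, hsupp c hc, hc⟩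
  by_contra hdi
  -- subtracting a multiple of the relation `d` kills the `i`-th coefficient of `c`
  refine hsupp (fun j => c j - c i / d i * d j) ?_ i hi (by simp [div_mul_cancel₀ _ hdi])
  simp only [sub_smul, sum_sub_distrib, mul_smul, ← smul_sum, hd, smul_zero, sub_zero, hc]

namespace Polynomial

section CommRing

variable {R : Type*} [CommRing R] {n : ℕ}

lemma coeff_prod_sum_of_natDegree_le {ι : Type*} (s : Finset ι) {f : ι → R[X]} {e : ι → ℕ}
    (h : ∀ i ∈ s, (f i).natDegree ≤ e i) :
    (∏ i ∈ s, f i).coeff (∑ i ∈ s, e i) = ∏ i ∈ s, (f i).coeff (e i) := by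
  classical
  induction s using Finset.induction_on with
  | empty => simp
  | insert a s ha ih =>
    rw [prod_insert ha, sum_insert ha, prod_insert ha,
      coeff_mul_add_eq_of_natDegree_le (h a (mem_insert_self a s))
        ((natDegree_prod_le _ _).trans (sum_le_sum fun i hi => h i (mem_insert_of_mem hi))),
      ih fun i hi => h i (mem_insert_of_mem hi)]

lemma coeff_iterate_derivative_natDegree_sub (p : R[X]) (k : ℕ) :
    (derivative^[k] p).coeff (p.natDegree - k) =
      (p.natDegree.descFactorial k : R) * p.leadingCoeff := by
  rcases lt_or_ge p.natDegree k with hk | hk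
  · simp [iterate_derivative_eq_zero hk, Nat.descFactorial_eq_zero_iff_lt.mpr hk]
  · rw [coeff_iterate_derivative, Nat.sub_add_cancel hk, nsmul_eq_mul, leadingCoeff]

lemma natDegree_det_le {M : Matrix (Fin n) (Fin n) R[X]} {d : ℕ}
    (hM : ∀ p i, (M p i).natDegree ≤ d * i) : M.det.natDegree ≤ d * n.choose 2 := by
  rw [Matrix.det_apply', ← Fin.sum_univ_val_eq_choose_two, mul_sum]
  refine natDegree_sum_le_of_forall_le _ _ fun σ _ => (natDegree_mul_le).trans ?_
  rw [natDegree_intCast, zero_add]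
  exact (natDegree_prod_le _ _).trans (sum_le_sum fun i _ => hM _ _)

lemma mul_derivative_pow (p : R[X]) (m : ℕ) :
    p * derivative (p ^ m) = p ^ m * ((m : R[X]) * derivative p) := by
  cases m with
  | zero => simp
  | succ m =>
    rw [derivative_pow_succ, ← C_eq_natCast]
    simp only [map_add, map_natCast, map_one, Nat.cast_add, Nat.cast_one]
    ring

lemma pow_succ_mul_derivative (Z F : R[X]) (i : ℕ) :
    Z ^ (i + 1) * derivative F =
      Z * derivative (Z ^ i * F) - (i : R[X]) * derivative Z * (Z ^ i * F) := by
  rw [derivative_mul, mul_add, ← mul_assoc, mul_derivative_pow]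
  ring

lemma natDegree_mul_derivative_le {Z q : R[X]} {d e : ℕ} (hZ : Z.natDegree ≤ d + 1)
    (hq : q.natDegree ≤ e) : (Z * derivative q).natDegree ≤ d + e := by
  by_cases hq0 : q.natDegree = 0
  · simp [derivative_of_natDegree_zero hq0]
  · exact natDegree_mul_le.trans (by have := natDegree_derivative_lt hq0; omega)

lemma exists_pow_mul_iterate_derivative_eq_mul {Z f h : R[X]} {d : ℕ}
    (hZ : Z.natDegree ≤ d + 1) (hh : h.natDegree ≤ d) (hf : Z * derivative f = f * h) (i : ℕ) :
    ∃ q : R[X], q.natDegree ≤ d * i ∧ Z ^ i * derivative^[i] f = f * q := by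
  induction i with
  | zero => exact ⟨1, by simp, by simp⟩
  | succ i ih =>
    obtain ⟨q, hq, hfq⟩ := ih
    refine ⟨h * q + Z * derivative q - (i : R[X]) * derivative Z * q, ?_, ?_⟩
    · have hiZ : ((i : R[X]) * derivative Z).natDegree ≤ d := natDegree_mul_le.trans <| by
        rw [natDegree_natCast]; have := natDegree_derivative_le Z; omega
      rw [Nat.mul_succ]
      refine (natDegree_sub_le _ _).trans (max_le ((natDegree_add_le _ _).trans (max_le ?_ ?_)) ?_)
      · exact natDegree_mul_le.trans (by omega)
      · exact (natDegree_mul_derivative_le hZ hq).trans (by omega)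
      · exact natDegree_mul_le.trans (by omega)
    · rw [Function.iterate_succ_apply', pow_succ_mul_derivative, hfq, derivative_mul]
      linear_combination q * hf

lemma exists_mul_derivative_eq_mul (u v w t : R) (a b c : ℕ) :
    ∃ h : R[X], h.natDegree ≤ 2 ∧
      X * (C u * X + C v) * (C w * X + C t) *
          derivative (X ^ a * (C u * X + C v) ^ b * (C w * X + C t) ^ c) =
        X ^ a * (C u * X + C v) ^ b * (C w * X + C t) ^ c * h := by
  refine ⟨(a : R[X]) * (C u * X + C v) * (C w * X + C t)
      + (b : R[X]) * (C u * X) * (C w * X + C t)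
      + (c : R[X]) * (C w * X) * (C u * X + C v), by compute_degree, ?_⟩
  have ha := mul_derivative_pow (X : R[X]) a
  have hb := mul_derivative_pow (C u * X + C v) b
  have hc := mul_derivative_pow (C w * X + C t) c
  simp only [derivative_X, derivative_add, derivative_mul, derivative_C, zero_mul, zero_add,
    mul_one] at ha hb hc
  simp only [derivative_mul]
  linear_combination ((C u * X + C v) ^ (b + 1) * (C w * X + C t) ^ (c + 1)) * ha
    + (X ^ (a + 1) * (C w * X + C t) ^ (c + 1)) * hb
    + (X ^ (a + 1) * (C u * X + C v) ^ (b + 1)) * hc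

lemma exists_pow_mul_iterate_derivative_eq_mul_of_linear (u v w t : R) (a b c i : ℕ) :
    ∃ q : R[X], q.natDegree ≤ 2 * i ∧
      (X * (C u * X + C v) * (C w * X + C t)) ^ i *
          derivative^[i] (X ^ a * (C u * X + C v) ^ b * (C w * X + C t) ^ c) =
        X ^ a * (C u * X + C v) ^ b * (C w * X + C t) ^ c * q := by
  obtain ⟨h, hh, hfh⟩ := exists_mul_derivative_eq_mul u v w t a b c
  exact exists_pow_mul_iterate_derivative_eq_mul (by compute_degree) hh hfh i

lemma C_mul_X_add_C_ne_zero (x : R) {y : R} (hy : y ≠ 0) : C x * X + C y ≠ 0 := fun h =>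
  hy (by simpa using congrArg (eval 0) h)

lemma X_pow_natTrailingDegree_dvd (p : R[X]) : X ^ p.natTrailingDegree ∣ p :=
  X_pow_dvd_iff.mpr fun _ hd => coeff_eq_zero_of_lt_natTrailingDegree hd

lemma le_natTrailingDegree_of_X_pow_dvd {p : R[X]} {m : ℕ} (hp : p ≠ 0) (h : X ^ m ∣ p) :
    m ≤ p.natTrailingDegree :=
  le_natTrailingDegree hp fun d hd => X_pow_dvd_iff.mp h d hd

lemma natTrailingDegree_X_pow_mul {q : R[X]} (hq : q.coeff 0 ≠ 0) (a : ℕ) :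
    (X ^ a * q).natTrailingDegree = a := by
  have hq0 : q ≠ 0 := fun h => hq (by simp [h])
  rw [mul_comm, natTrailingDegree_mul_X_pow hq0, natTrailingDegree_eq_zero.mpr (Or.inr hq),
    zero_add]

noncomputable def wronskianMatrix (g : Fin n → R[X]) : Matrix (Fin n) (Fin n) R[X] :=
  Matrix.of fun p i => derivative^[i] (g p)

lemma wronskianMatrix_update (g : Fin n → R[X]) (r : Fin n) (x : R[X]) :
    wronskianMatrix (Function.update g r x) =
      (wronskianMatrix g).updateRow r fun i => derivative^[i] x := by
  ext p i
  by_cases hp : p = r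
  · subst hp; simp [wronskianMatrix]
  · simp [wronskianMatrix, hp]

lemma det_wronskianMatrix_update_sum (g : Fin n → R[X]) (r : Fin n) (c : Fin n → R) :
    (wronskianMatrix (Function.update g r (∑ p, c p • g p))).det =
      C (c r) * (wronskianMatrix g).det := by
  have hrow : (fun i : Fin n => derivative^[i] (∑ p, c p • g p)) =
      ∑ p, C (c p) • wronskianMatrix g p := by
    ext1 i
    simp [wronskianMatrix, iterate_derivative_sum, smul_eq_C_mul]
  rw [wronskianMatrix_update, hrow, Matrix.det_updateRow_sum, smul_eq_mul]

lemma det_wronskianMatrix_update_sub_smul (g : Fin n → R[X]) {p r : Fin n} (hpr : p ≠ r)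
    (c : R) : (wronskianMatrix (Function.update g r (g r - c • g p))).det =
      (wronskianMatrix g).det := by
  have hrow : (fun i : Fin n => derivative^[i] (g r - c • g p)) =
      wronskianMatrix g r + (-C c) • wronskianMatrix g p := by
    ext1 i
    simp [wronskianMatrix, smul_eq_C_mul, sub_eq_add_neg]
  rw [wronskianMatrix_update, hrow, Matrix.det_updateRow_add_smul_self _ hpr.symm]

lemma det_pow_mul_wronskianMatrix (g : Fin n → R[X]) (Z : R[X]) :
    (Matrix.of fun p (i : Fin n) => Z ^ (i : ℕ) * wronskianMatrix g p i).det =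
      Z ^ n.choose 2 * (wronskianMatrix g).det := by
  rw [Matrix.det_mul_row, prod_pow_eq_pow_sum, Fin.sum_univ_val_eq_choose_two]

lemma X_pow_sum_dvd_pow_mul_det_wronskianMatrix (g : Fin n → R[X]) (m : Fin n → ℕ)
    (hm : ∀ p, X ^ m p ∣ g p) : X ^ ∑ p, m p ∣ X ^ n.choose 2 * (wronskianMatrix g).det := by
  rw [← det_pow_mul_wronskianMatrix, ← prod_pow_eq_pow_sum]
  refine Matrix.prod_dvd_det_of_dvd _ _ fun p i => ?_
  calc X ^ m p ∣ X ^ (i : ℕ) * X ^ (m p - i) := by rw [← pow_add]; exact pow_dvd_pow _ (by omega)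
    _ ∣ X ^ (i : ℕ) * derivative^[i] (g p) :=
      mul_dvd_mul_left _ (pow_sub_dvd_iterate_derivative_of_pow_dvd _ (hm p))

lemma pow_mul_det_wronskianMatrix_eq (g : Fin n → R[X]) (Z : R[X]) (Q : Fin n → ℕ → R[X])
    (hQ : ∀ p i, Z ^ i * derivative^[i] (g p) = g p * Q p i) :
    Z ^ n.choose 2 * (wronskianMatrix g).det =
      (∏ p, g p) * (Matrix.of fun p (i : Fin n) => Q p i).det := by
  rw [← det_pow_mul_wronskianMatrix, ← Matrix.det_mul_column]
  exact congrArg Matrix.det (Matrix.ext fun p i => hQ p i)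

lemma coeff_det_wronskianMatrix (g : Fin n → R[X]) :
    (wronskianMatrix g).det.coeff (∑ p, (g p).natDegree - n.choose 2) =
      (Matrix.of fun p (i : Fin n) =>
        ((g p).natDegree.descFactorial i : R) * (g p).leadingCoeff).det := by
  simp only [Matrix.det_apply', finsetSum_coeff, coeff_intCast_mul]
  refine sum_congr rfl fun σ _ => congrArg _ ?_
  simp only [wronskianMatrix, Matrix.of_apply]
  by_cases hbad : ∃ i : Fin n, (g (σ i)).natDegree < i
  · obtain ⟨i, hi⟩ := hbad
    rw [prod_eq_zero (mem_univ i) (iterate_derivative_eq_zero hi), coeff_zero,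
      prod_eq_zero (mem_univ i) (by rw [Nat.descFactorial_eq_zero_iff_lt.mpr hi]; simp)]
  · push Not at hbad
    have hN : ∑ i : Fin n, ((g (σ i)).natDegree - i) = ∑ p, (g p).natDegree - n.choose 2 := by
      rw [sum_tsub_distrib _ fun i _ => hbad i, Equiv.sum_comp σ fun p => (g p).natDegree,
        Fin.sum_univ_val_eq_choose_two]
    rw [← hN, coeff_prod_sum_of_natDegree_le _ fun i _ => natDegree_iterate_derivative _ _]
    exact prod_congr rfl fun i _ => coeff_iterate_derivative_natDegree_sub _ _

end CommRing

section IsDomain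

variable {R : Type*} [CommRing R] [IsDomain R] {n : ℕ}

lemma natTrailingDegree_C_mul {a : R} (ha : a ≠ 0) {p : R[X]} (hp : p ≠ 0) :
    (C a * p).natTrailingDegree = p.natTrailingDegree := by
  rw [natTrailingDegree_mul (C_ne_zero.mpr ha) hp, natTrailingDegree_C, zero_add]

lemma natTrailingDegree_prod {ι : Type*} (s : Finset ι) {f : ι → R[X]} (hf : ∀ i ∈ s, f i ≠ 0) :
    (∏ i ∈ s, f i).natTrailingDegree = ∑ i ∈ s, (f i).natTrailingDegree := by
  classical
  induction s using Finset.induction_on with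
  | empty => simp
  | insert a s ha ih =>
    rw [prod_insert ha, sum_insert ha, natTrailingDegree_mul (hf a (mem_insert_self a s))
      (prod_ne_zero_iff.mpr fun i hi => hf i (mem_insert_of_mem hi)),
      ih fun i hi => hf i (mem_insert_of_mem hi)]

lemma natTrailingDegree_X_pow_mul_linear_pow {u v w t : R} (hv : v ≠ 0) (ht : t ≠ 0)
    (a b c : ℕ) : (X ^ a * (C u * X + C v) ^ b * (C w * X + C t) ^ c).natTrailingDegree = a := by
  rw [mul_assoc]
  exact natTrailingDegree_X_pow_mul (by simp [coeff_zero_eq_eval_zero, hv, ht]) a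

lemma sum_natTrailingDegree_le_natTrailingDegree_det_wronskianMatrix {g : Fin n → R[X]}
    (hW : (wronskianMatrix g).det ≠ 0) :
    ∑ p, (g p).natTrailingDegree ≤ n.choose 2 + (wronskianMatrix g).det.natTrailingDegree := by
  have h := le_natTrailingDegree_of_X_pow_dvd (mul_ne_zero (pow_ne_zero _ X_ne_zero) hW)
    (X_pow_sum_dvd_pow_mul_det_wronskianMatrix g _ fun p => X_pow_natTrailingDegree_dvd (g p))
  rwa [natTrailingDegree_mul (pow_ne_zero _ X_ne_zero) hW, natTrailingDegree_X_pow] at h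

lemma natTrailingDegree_det_wronskianMatrix_le {g : Fin n → R[X]} (hg : ∀ p, g p ≠ 0)
    (hW : (wronskianMatrix g).det ≠ 0) {Z : R[X]} (hZ : Z ≠ 0) (hXZ : X ∣ Z) {d : ℕ}
    (hjet : ∀ p i, ∃ q : R[X], q.natDegree ≤ d * i ∧ Z ^ i * derivative^[i] (g p) = g p * q) :
    n.choose 2 + (wronskianMatrix g).det.natTrailingDegree ≤
      ∑ p, (g p).natTrailingDegree + d * n.choose 2 := by
  choose Q hQdeg hQ using hjet
  have heq := pow_mul_det_wronskianMatrix_eq g Z Q hQ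
  have hprod : (∏ p, g p) ≠ 0 := prod_ne_zero_iff.mpr fun p _ => hg p
  have hdetQ : (Matrix.of fun p (i : Fin n) => Q p i).det ≠ 0 := by
    rintro h
    rw [h, mul_zero] at heq
    exact mul_ne_zero (pow_ne_zero _ hZ) hW heq
  have hZT := le_natTrailingDegree_of_X_pow_dvd (pow_ne_zero (n.choose 2) hZ)
    (pow_dvd_pow_of_dvd hXZ _)
  have hQT := (natTrailingDegree_le_natDegree _).trans
    (natDegree_det_le (M := Matrix.of fun p (i : Fin n) => Q p i) fun p i => hQdeg p i)
  have h := congrArg natTrailingDegree heq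
  rw [natTrailingDegree_mul (pow_ne_zero _ hZ) hW, natTrailingDegree_mul hprod hdetQ,
    natTrailingDegree_prod _ fun p _ => hg p] at h
  omega

end IsDomain

section Field

variable {K : Type*} [Field K] {n : ℕ}

lemma exists_det_wronskianMatrix_eq_of_natDegree_eq {g : Fin n → K[X]}
    (hg : LinearIndependent K g) {p r : Fin n} (hpr : p ≠ r)
    (hdeg : (g p).natDegree = (g r).natDegree) :
    ∃ g' : Fin n → K[X], LinearIndependent K g' ∧
      (wronskianMatrix g').det = (wronskianMatrix g).det ∧
      ∑ q, (g' q).natDegree < ∑ q, (g q).natDegree := by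
  classical
  have hp0 := hg.ne_zero p
  have hr0 := hg.ne_zero r
  set c := (g r).leadingCoeff / (g p).leadingCoeff
  have hc : c ≠ 0 := div_ne_zero (leadingCoeff_ne_zero.mpr hr0) (leadingCoeff_ne_zero.mpr hp0)
  set g' := Function.update g r (g r - c • g p)
  have hg' : LinearIndependent K g' := by
    refine hg.update r _ ⟨1, one_mem _, Finsupp.single r 1 + Finsupp.single p (-c), ?_, ?_⟩
    · simp [hpr]
    · simp [sub_eq_add_neg]
  refine ⟨g', hg', det_wronskianMatrix_update_sub_smul g hpr c, ?_⟩
  have hlt : (g r - c • g p).natDegree < (g r).natDegree := by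
    refine natDegree_lt_natDegree (by simpa [g'] using hg'.ne_zero r) (degree_sub_lt_left ?_ hr0 ?_)
    · rw [smul_eq_C_mul, degree_C_mul hc, degree_eq_natDegree hp0, degree_eq_natDegree hr0, hdeg]
    · rw [smul_eq_C_mul, leadingCoeff_mul, leadingCoeff_C,
        div_mul_cancel₀ _ (leadingCoeff_ne_zero.mpr hp0)]
  refine sum_lt_sum (fun q _ => ?_) ⟨r, mem_univ r, by simpa [g'] using hlt⟩
  by_cases hq : q = r
  · subst hq; simpa [g'] using hlt.le
  · simp [g', hq]

variable [CharZero K]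

lemma det_descFactorial_mul_ne_zero {d : Fin n → ℕ} (hd : Function.Injective d)
    {b : Fin n → K} (hb : ∀ p, b p ≠ 0) :
    (Matrix.of fun p (i : Fin n) => ((d p).descFactorial i : K) * b p).det ≠ 0 := by
  have hdet : (Matrix.of fun p (i : Fin n) => ((d p).descFactorial i : K) * b p).det =
      (∏ p, b p) * (Matrix.of fun p (i : Fin n) => (descPochhammer K i).eval (d p : K)).det := by
    rw [← Matrix.det_mul_column]
    congr 1
    ext p i
    simp [descPochhammer_eval_eq_descFactorial, mul_comm]
  rw [hdet, ← Matrix.det_eval_matrixOfPolynomials_eq_det_vandermonde _ _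
    (fun i => descPochhammer_natDegree K i) (fun i => monic_descPochhammer K i)]
  exact mul_ne_zero (prod_ne_zero_iff.mpr fun p _ => hb p)
    (Matrix.det_vandermonde_ne_zero_iff.mpr (Nat.cast_injective.comp hd))

lemma det_wronskianMatrix_ne_zero_of_injective {g : Fin n → K[X]} (hg : ∀ p, g p ≠ 0)
    (hd : Function.Injective fun p => (g p).natDegree) : (wronskianMatrix g).det ≠ 0 := fun h0 =>
  det_descFactorial_mul_ne_zero hd (fun p => leadingCoeff_ne_zero.mpr (hg p))
    (by rw [← coeff_det_wronskianMatrix, h0, coeff_zero])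

/-- Row operations `g r ↦ g r - c • g p` lower the total degree until all degrees are distinct;
then the coefficient of `W` in degree `∑ deg g p - n.choose 2` is, up to the leading
coefficients, a Vandermonde determinant in the degrees. -/
theorem det_wronskianMatrix_ne_zero {g : Fin n → K[X]} (hg : LinearIndependent K g) :
    (wronskianMatrix g).det ≠ 0 := by
  induction h : ∑ q, (g q).natDegree using Nat.strong_induction_on generalizing g with
  | _ N ih =>
    by_cases hinj : Function.Injective fun p => (g p).natDegree
    · exact det_wronskianMatrix_ne_zero_of_injective hg.ne_zero hinj
    · obtain ⟨p, r, hdeg, hpr⟩ := Function.not_injective_iff.mp hinj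
      obtain ⟨g', hg', hdet, hlt⟩ := exists_det_wronskianMatrix_eq_of_natDegree_eq hg hpr hdeg
      rw [← hdet]
      exact ih _ (h ▸ hlt) hg' rfl

theorem natTrailingDegree_sum_smul_le {g : Fin n → K[X]} (hg : LinearIndependent K g)
    {Z : K[X]} (hZ : Z ≠ 0) (hXZ : X ∣ Z) {d : ℕ}
    (hjet : ∀ p i, ∃ q : K[X], q.natDegree ≤ d * i ∧ Z ^ i * derivative^[i] (g p) = g p * q)
    (c : Fin n → K) {z : Fin n} (hcz : c z ≠ 0) :
    (∑ p, c p • g p).natTrailingDegree ≤ (g z).natTrailingDegree + d * n.choose 2 := by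
  classical
  set x := ∑ p, c p • g p
  have hW := det_wronskianMatrix_ne_zero hg
  have hW' := det_wronskianMatrix_update_sum g z c
  have hlower := sum_natTrailingDegree_le_natTrailingDegree_det_wronskianMatrix
    (g := Function.update g z x) (by rw [hW']; exact mul_ne_zero (C_ne_zero.mpr hcz) hW)
  rw [hW', natTrailingDegree_C_mul hcz hW, ← add_sum_erase _ _ (mem_univ z),
    Function.update_self, sum_congr rfl fun p hp => by
      rw [Function.update_of_ne (ne_of_mem_erase hp)]] at hlower
  have hupper := natTrailingDegree_det_wronskianMatrix_le hg.ne_zero hW hZ hXZ hjet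
  rw [← add_sum_erase _ _ (mem_univ z)] at hupper
  omega

end Field

end Polynomial

theorem stmt13_general {K : Type*} [Field K] [CharZero K] (k : ℕ)
    (a : Fin k → K) (α β γ : Fin k → ℕ)
    (u v w t : K) (hv : v ≠ 0) (ht : t ≠ 0)
    (P : K[X])
    (hPdef : P = ∑ j, C (a j) * X ^ (α j) * (C u * X + C v) ^ (β j) * (C w * X + C t) ^ (γ j))
    (hP : P ≠ 0) :
    ∃ j : Fin k, P.rootMultiplicity 0 ≤ α j + 2 * (k - (j : ℕ)).choose 2 := by
  set F : Fin k → K[X] := fun j => X ^ α j * (C u * X + C v) ^ β j * (C w * X + C t) ^ γ j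
  obtain ⟨s, -, c, hs, hc, hsum⟩ := exists_linearIndepOn_sum_smul_eq F univ a
  have hPs : P = ∑ j ∈ s, c j • F j := by
    rw [hPdef, ← hsum]
    simp only [F, smul_eq_C_mul, mul_assoc]
  have hsne : s.Nonempty := nonempty_iff_ne_empty.mpr fun h => hP (by simp [hPs, h])
  set j0 := s.min' hsne
  set e : Fin s.card ≃ s := s.equivFin.symm
  have hPe : P = ∑ p, c (e p) • F (e p) := by rw [hPs, ← sum_coe_sort, ← e.sum_comp]
  have hval := natTrailingDegree_sum_smul_le (hs.comp e e.injective)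
    (mul_ne_zero (mul_ne_zero X_ne_zero (C_mul_X_add_C_ne_zero u hv)) (C_mul_X_add_C_ne_zero w ht))
    (dvd_mul_of_dvd_left (dvd_mul_right X _) _)
    (fun p => exists_pow_mul_iterate_derivative_eq_mul_of_linear u v w t _ _ _)
    (fun p => c (e p)) (z := e.symm ⟨j0, min'_mem s hsne⟩) (hc _ (e _).2)
  have hcard : s.card ≤ k - j0 := by
    simpa using card_le_card fun j hj => mem_Ici.mpr (s.min'_le j hj)
  refine ⟨j0, ?_⟩
  rw [rootMultiplicity_eq_natTrailingDegree', hPe]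
  simp only [Function.comp_apply, Equiv.apply_symm_apply, F,
    natTrailingDegree_X_pow_mul_linear_pow hv ht] at hval
  exact hval.trans (by gcongr)

theorem stmt13 {K : Type*} [Field K] [CharZero K] (k : ℕ)
    (a : Fin k → K) (α β γ : Fin k → ℕ) (hα : Monotone α)
    (u v w t : K) (hu : u ≠ 0) (hv : v ≠ 0) (hw : w ≠ 0) (ht : t ≠ 0)
    (P : K[X])
    (hPdef : P = ∑ j, C (a j) * X ^ (α j) * (C u * X + C v) ^ (β j) * (C w * X + C t) ^ (γ j))
    (hP : P ≠ 0) :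
    ∃ j : Fin k, P.rootMultiplicity 0 ≤ α j + 2 * (k - (j : ℕ)).choose 2 :=
  stmt13_general k a α β γ u v w t hv ht P hPdef hP
end
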